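/- arXiv:2306.17343 — 2 statements merged into one kernel-verified Lean document; each statement's English description precedes it below -/
import Mathlib

section
/- Let 1<p<2 and λ>0, and set d_λ = (p-1)·[2^p (2-p)^{2-p} / λ^{2-p}]^{1/(p-1)}. For every d with 0<d<d_λ there exist η_d, ξ_d > 0 with η_d < s_0(d) < ξ_d, where s_0(d) = (2^p (p-1)/d)^{1/(2-p)}, such that f_d(s) = λ - 2^p s^{p-1} + d s < 0 for all s ∈ (η_d, ξ_d). -/
theorem stmt_1 (p lam : ℝ) (hp1 : 1 < p) (hp2 : p < 2) (hlam : 0 < lam)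
    (dlam : ℝ)
    (hdlam : dlam = (p - 1) * (2 ^ p * (2 - p) ^ (2 - p) / lam ^ (2 - p)) ^ (1 / (p - 1))) :
    ∀ d : ℝ, 0 < d → d < dlam →
      ∃ η ξ : ℝ, 0 < η ∧ 0 < ξ ∧
        η < (2 ^ p * (p - 1) / d) ^ (1 / (2 - p)) ∧
        (2 ^ p * (p - 1) / d) ^ (1 / (2 - p)) < ξ ∧
        ∀ s ∈ Set.Ioo η ξ, lam - 2 ^ p * s ^ (p - 1) + d * s < 0 := by
  intro d hd hdlt
  have hq : (0:ℝ) < p - 1 := by linarith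
  have hr : (0:ℝ) < 2 - p := by linarith
  set A : ℝ := (2:ℝ) ^ p with hA
  have hA0 : 0 < A := Real.rpow_pos_of_pos two_pos p
  have hdlam0 : 0 < dlam := by
    rw [hdlam]
    have h : (0:ℝ) < A * (2 - p) ^ (2 - p) / lam ^ (2 - p) := by positivity
    positivity
  set s0 : ℝ := (A * (p - 1) / d) ^ (1 / (2 - p)) with hs0
  have hbase : 0 < A * (p - 1) / d := by positivity
  have hs0pos : 0 < s0 := Real.rpow_pos_of_pos hbase _
  -- s0 ^ (2-p) = A (p-1) / d
  have key1 : s0 ^ (2 - p) = A * (p - 1) / d := by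
    rw [hs0, ← Real.rpow_mul hbase.le, one_div_mul_cancel hr.ne', Real.rpow_one]
  -- d * s0 = A (p-1) s0^(p-1)
  have key2 : d * s0 = A * (p - 1) * s0 ^ (p - 1) := by
    have h1 : s0 ^ (2 - p) * s0 ^ (p - 1) = s0 := by
      rw [← Real.rpow_add hs0pos, show (2 - p) + (p - 1) = 1 by ring, Real.rpow_one]
    calc d * s0 = d * (s0 ^ (2 - p) * s0 ^ (p - 1)) := by rw [h1]
      _ = d * (A * (p - 1) / d) * s0 ^ (p - 1) := by rw [key1]; ring
      _ = A * (p - 1) * s0 ^ (p - 1) := by field_simp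
  set sstar : ℝ := (lam / (A * (2 - p))) ^ (1 / (p - 1)) with hsstar
  have hsb : 0 < lam / (A * (2 - p)) := by positivity
  have hsstarpos : 0 < sstar := Real.rpow_pos_of_pos hsb _
  -- identity : (A (p-1) / dlam)^(1/(2-p)) = sstar
  have hid : (A * (p - 1) / dlam) ^ (1 / (2 - p)) = sstar := by
    have h1 : (0:ℝ) < A * (p - 1) / dlam := by positivity
    rw [hsstar,
        ← Real.exp_log (Real.rpow_pos_of_pos h1 (1 / (2 - p))),
        ← Real.exp_log (Real.rpow_pos_of_pos hsb (1 / (p - 1)))]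
    congr 1
    rw [Real.log_rpow h1, Real.log_rpow hsb,
        Real.log_div (by positivity : A * (p-1) ≠ 0) hdlam0.ne',
        Real.log_mul hA0.ne' hq.ne',
        Real.log_div hlam.ne' (by positivity : A * (2-p) ≠ 0),
        Real.log_mul hA0.ne' hr.ne', hdlam,
        Real.log_mul hq.ne' (by positivity : ((A * (2 - p) ^ (2 - p) / lam ^ (2 - p)) ^ (1 / (p - 1)) : ℝ) ≠ 0),
        Real.log_rpow (show (0:ℝ) < A * (2 - p) ^ (2 - p) / lam ^ (2 - p) by positivity),
        Real.log_div (by positivity : A * (2-p)^(2-p) ≠ 0) (by positivity : lam ^ (2-p) ≠ 0),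
        Real.log_mul hA0.ne' (by positivity : ((2-p) ^ (2-p) : ℝ) ≠ 0),
        Real.log_rpow hr, Real.log_rpow hlam]
    field_simp
    ring
  -- sstar < s0
  have hlt : sstar < s0 := by
    rw [← hid, hs0]
    exact Real.rpow_lt_rpow (by positivity)
      (div_lt_div_of_pos_left (by positivity) hd hdlt) (by positivity)
  -- key negativity at s0
  have hstarq : sstar ^ (p - 1) = lam / (A * (2 - p)) := by
    rw [hsstar, ← Real.rpow_mul hsb.le, one_div_mul_cancel hq.ne', Real.rpow_one]
  have hmono : sstar ^ (p - 1) < s0 ^ (p - 1) :=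
    Real.rpow_lt_rpow hsstarpos.le hlt hq
  have hgs0 : lam - A * s0 ^ (p - 1) + d * s0 < 0 := by
    have h2 : lam < A * (2 - p) * s0 ^ (p - 1) := by
      have := (div_lt_iff₀ (by positivity : (0:ℝ) < A * (2 - p))).mp (hstarq ▸ hmono)
      linarith [this]
    rw [key2]; nlinarith
  -- continuity argument
  have hcont : ContinuousAt (fun s : ℝ => lam - A * s ^ (p - 1) + d * s) s0 := by
    apply ContinuousAt.add
    · exact continuousAt_const.sub
        (continuousAt_const.mul (Real.continuousAt_rpow_const s0 (p - 1) (Or.inl hs0pos.ne')))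
    · exact continuousAt_const.mul continuousAt_id
  have hev : ∀ᶠ s in nhds s0, lam - A * s ^ (p - 1) + d * s < 0 :=
    hcont.eventually_lt continuousAt_const hgs0
  obtain ⟨ε, hε, hball⟩ := Metric.eventually_nhds_iff.mp hev
  have hε' : 0 < min ε s0 := lt_min hε hs0pos
  refine ⟨s0 - min ε s0 / 2, s0 + min ε s0 / 2, ?_, ?_, ?_, ?_, ?_⟩
  · have := min_le_right ε s0; linarith
  · linarith
  · linarith
  · linarith
  · intro s hs
    apply hball
    rw [Real.dist_eq, abs_lt]
    obtain ⟨h1, h2⟩ := hs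
    have := min_le_left ε s0
    constructor <;> linarith
end

section
/- Let p ∈ (1,2] and λ, μ11, μ22, μ12 > 0 satisfy (μ11 μ22 - μ12²)/(μ11 + μ22) > d*, where d* = ((p-1)²/4)·[2^p (2-p)^{2-p}/λ^{2-p}]^{2/(p-1)} if 1<p<2 and d* = 4 if p = 2. Then the quantity λ x² - 2^p |x|^{p+1} + 2((μ11μ22-μ12²)/(μ11+μ22))^{1/2} |x|³ is nonnegative for all x ∈ ℝ. -/
theorem stmt_19 (p lam μ11 μ22 μ12 : ℝ) (hp1 : 1 < p) (hp2 : p ≤ 2)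
    (hlam : 0 < lam) (h11 : 0 < μ11) (h22 : 0 < μ22) (h12 : 0 < μ12)
    (dstar : ℝ)
    (hdstar : dstar = if p < 2 then
        (p - 1) ^ 2 / 4 * (2 ^ p * (2 - p) ^ (2 - p) / lam ^ (2 - p)) ^ (2 / (p - 1))
      else 4)
    (hD : dstar < (μ11 * μ22 - μ12 ^ 2) / (μ11 + μ22)) :
    ∀ x : ℝ,
      0 ≤ lam * x ^ 2 +
          2 * Real.sqrt ((μ11 * μ22 - μ12 ^ 2) / (μ11 + μ22)) * |x| ^ 3 -
          2 ^ p * |x| ^ (p + 1) := by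
  intro x
  set D : ℝ := (μ11 * μ22 - μ12 ^ 2) / (μ11 + μ22) with hDdef
  set t : ℝ := |x| with htdef
  have ht : 0 ≤ t := abs_nonneg x
  have hx2 : x ^ 2 = t ^ 2 := (sq_abs x).symm
  rcases lt_or_ge p 2 with hplt | hpge
  · -- case 1 < p < 2
    rw [if_pos hplt] at hdstar
    have h2p : (0:ℝ) < 2 - p := by linarith
    have hp1' : (0:ℝ) < p - 1 := by linarith
    have hBpos : (0:ℝ) < 2 ^ p * (2 - p) ^ (2 - p) / lam ^ (2 - p) := by
      apply div_pos (mul_pos (Real.rpow_pos_of_pos two_pos p)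
        (Real.rpow_pos_of_pos h2p _)) (Real.rpow_pos_of_pos hlam _)
    set B : ℝ := 2 ^ p * (2 - p) ^ (2 - p) / lam ^ (2 - p) with hBdef
    set c : ℝ := B ^ (1 / (p - 1)) with hcdef
    have hcpos : 0 < c := Real.rpow_pos_of_pos hBpos _
    -- c ^ (p-1) = B
    have hcB : c ^ (p - 1) = B := by
      rw [hcdef, ← Real.rpow_mul hBpos.le, one_div, inv_mul_cancel₀ (ne_of_gt hp1'),
        Real.rpow_one]
    -- dstar = ((p-1)/2 * c)^2
    have hdsq : dstar = ((p - 1) / 2 * c) ^ 2 := by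
      have hc2 : c ^ (2:ℕ) = B ^ (2 / (p - 1)) := by
        rw [hcdef, ← Real.rpow_natCast (B ^ (1 / (p-1))) 2, ← Real.rpow_mul hBpos.le]
        norm_num
        ring_nf
      rw [hdstar, mul_pow, ← hc2]
      push_cast
      ring
    have hdstar_nonneg : 0 ≤ dstar := by rw [hdsq]; positivity
    have hDpos : 0 < D := lt_of_le_of_lt hdstar_nonneg hD
    have hsqrt : (p - 1) * c < 2 * Real.sqrt D := by
      have h1 : Real.sqrt dstar < Real.sqrt D := Real.sqrt_lt_sqrt hdstar_nonneg hD
      have h2 : Real.sqrt dstar = (p - 1) / 2 * c := by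
        rw [hdsq, Real.sqrt_sq (by positivity)]
      nlinarith
    -- Young / weighted AM-GM : 2^p * t^(p-1) ≤ lam + (p-1)*c*t
    have hyoung : 2 ^ p * t ^ (p - 1) ≤ lam + (p - 1) * c * t := by
      have := Real.geom_mean_le_arith_mean2_weighted hp1'.le h2p.le
        (mul_nonneg hcpos.le ht) (le_of_lt (div_pos hlam h2p)) (by ring)
      have hL : (c * t) ^ (p - 1) * (lam / (2 - p)) ^ (2 - p)
          = 2 ^ p * t ^ (p - 1) := by
        rw [Real.mul_rpow hcpos.le ht, hcB, Real.div_rpow hlam.le h2p.le, hBdef]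
        field_simp
      have hR : (p - 1) * (c * t) + (2 - p) * (lam / (2 - p)) = (p - 1) * c * t + lam := by
        field_simp
      rw [hL, hR] at this
      linarith
    rcases eq_or_lt_of_le ht with ht0 | htpos
    · rw [← ht0]
      have : ((0:ℝ)) ^ (p + 1) = 0 := Real.zero_rpow (by linarith)
      rw [this, hx2, ← ht0]
      norm_num
    · have hsplit : t ^ (p + 1) = t ^ (p - 1) * t ^ 2 := by
        rw [← Real.rpow_natCast t 2, ← Real.rpow_add htpos]
        congr 1
        push_cast
        ring
      rw [hsplit, hx2]
      have h2ppos : (0:ℝ) < 2 ^ p := Real.rpow_pos_of_pos two_pos p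
      have hkey : 2 ^ p * (t ^ (p - 1) * t ^ 2) ≤ (lam + 2 * Real.sqrt D * t) * t ^ 2 := by
        have h1 : 2 ^ p * t ^ (p - 1) ≤ lam + 2 * Real.sqrt D * t := by
          nlinarith [mul_le_mul_of_nonneg_right hsqrt.le ht]
        calc 2 ^ p * (t ^ (p - 1) * t ^ 2) = (2 ^ p * t ^ (p - 1)) * t ^ 2 := by ring
          _ ≤ (lam + 2 * Real.sqrt D * t) * t ^ 2 :=
            mul_le_mul_of_nonneg_right h1 (by positivity)
      nlinarith [hkey]
  · -- case p = 2
    have hpeq : p = 2 := le_antisymm hp2 hpge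
    rw [if_neg (by rw [hpeq]; norm_num)] at hdstar
    subst hpeq
    rw [hdstar] at hD
    have hDpos : (0:ℝ) < D := by linarith
    have hsqrt : 2 < Real.sqrt D := by
      have : Real.sqrt 4 < Real.sqrt D := Real.sqrt_lt_sqrt (by norm_num) hD
      have h4 : Real.sqrt 4 = 2 := by
        rw [show (4:ℝ) = 2^2 by norm_num, Real.sqrt_sq (by norm_num)]
      linarith
    have h1 : t ^ ((2:ℝ) + 1) = t ^ 3 := by
      rw [show ((2:ℝ) + 1) = ((3:ℕ):ℝ) by norm_num, Real.rpow_natCast]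
    have h2 : (2:ℝ) ^ (2:ℝ) = 4 := by
      rw [show ((2:ℝ)) = ((2:ℕ):ℝ) by norm_num, Real.rpow_natCast]; norm_num
    rw [h1, h2, hx2]
    have ht3 : 0 ≤ t ^ 3 := by positivity
    nlinarith [mul_le_mul_of_nonneg_right hsqrt.le ht3]
end
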